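/- arXiv:2406.11531 — 2 statements merged into one kernel-verified Lean document; each statement's English description precedes it below -/
import Mathlib

section
/- Let 0 < p ≤ t < ∞ and let W be a matrix weight on ℝⁿ. Then L^t(W) embeds continuously into M_p^{t,∞}(W), and M_p^{t,∞}(W) embeds continuously into L^p_loc(W): for every compact K ⊂ ℝⁿ there is a constant C_K with ‖f χ_K‖_{L^p(W)} ≤ C_K ‖f‖_{M_p^{t,∞}(W)}. -/
open MeasureTheory ENNReal Matrix
open scoped ENNReal ComplexOrder

noncomputable section

variable {n d : ℕ}

/-- The `α`-th power of a (Hermitian) matrix via spectral decomposition. -/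
def mpow (A : Matrix (Fin d) (Fin d) ℂ) (α : ℝ) : Matrix (Fin d) (Fin d) ℂ :=
  if hA : A.IsHermitian then
    (hA.eigenvectorUnitary : Matrix (Fin d) (Fin d) ℂ) *
      Matrix.diagonal (fun i => ((hA.eigenvalues i ^ α : ℝ) : ℂ)) *
      (star (hA.eigenvectorUnitary : Matrix (Fin d) (Fin d) ℂ))
  else 0

/-- Euclidean norm of a vector in `ℂ^d`. -/
def evnorm (v : Fin d → ℂ) : ℝ := ‖(WithLp.equiv 2 (Fin d → ℂ)).symm v‖

/-- Operator (spectral) norm of a matrix. -/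
def matNorm (A : Matrix (Fin d) (Fin d) ℂ) : ℝ := ‖Matrix.toEuclideanCLM (𝕜 := ℂ) A‖

/-- A matrix weight: nonnegative definite values, a.e. invertible, locally
integrable entries. -/
structure IsMatrixWeight (W : (Fin n → ℝ) → Matrix (Fin d) (Fin d) ℂ) : Prop where
  posSemidef : ∀ x, (W x).PosSemidef
  invertible : ∀ᵐ x ∂(volume : Measure (Fin n → ℝ)), IsUnit (W x)
  locInt : ∀ i j, MeasureTheory.LocallyIntegrable (fun x => W x i j) volume

/-- The dyadic cube `Q_{j,k} = ∏ᵢ [2^{-j} kᵢ, 2^{-j}(kᵢ+1))`. -/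
def dyadicCube (j : ℤ) (k : Fin n → ℤ) : Set (Fin n → ℝ) :=
  {x | ∀ i, (2:ℝ) ^ (-j) * k i ≤ x i ∧ x i < (2:ℝ) ^ (-j) * (k i + 1)}

/-- The `i`-th dyadic ancestor of `Q_{j,k}`. -/
def dyadicParent (i : ℕ) (j : ℤ) (k : Fin n → ℤ) : Set (Fin n → ℝ) :=
  dyadicCube (j - i) (fun m => Int.fdiv (k m) (2 ^ i))

/-- The axis-parallel cube with center `c` and side length `l`. -/
def cubeC (c : Fin n → ℝ) (l : ℝ) : Set (Fin n → ℝ) :=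
  {x | ∀ i, c i - l / 2 ≤ x i ∧ x i < c i + l / 2}

/-- `W(Q) = ∫_Q ‖W(y)‖ dy`. -/
def cubeWeight (W : (Fin n → ℝ) → Matrix (Fin d) (Fin d) ℂ) (Q : Set (Fin n → ℝ)) : ℝ≥0∞ :=
  ∫⁻ y in Q, ENNReal.ofReal (matNorm (W y))

/-- The single-cube term of the Bourgain-Morrey norm. -/
def BMterm (W : (Fin n → ℝ) → Matrix (Fin d) (Fin d) ℂ) (p t : ℝ)
    (f : (Fin n → ℝ) → Fin d → ℂ) (j : ℤ) (k : Fin n → ℤ) : ℝ≥0∞ :=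
  cubeWeight W (dyadicCube j k) ^ (1 / t - 1 / p) *
    (∫⁻ y in dyadicCube j k,
      ENNReal.ofReal (evnorm ((mpow (W y) (1 / p)).mulVec (f y)) ^ p)) ^ (1 / p)

/-- The matrix weighted Bourgain-Morrey norm of `M_p^{t,r}(W)`. -/
def BMnorm (W : (Fin n → ℝ) → Matrix (Fin d) (Fin d) ℂ) (p t : ℝ) (r : ℝ≥0∞)
    (f : (Fin n → ℝ) → Fin d → ℂ) : ℝ≥0∞ :=
  if r = ∞ then ⨆ jk : ℤ × (Fin n → ℤ), BMterm W p t f jk.1 jk.2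
  else (∑' jk : ℤ × (Fin n → ℤ), BMterm W p t f jk.1 jk.2 ^ r.toReal) ^ (1 / r.toReal)

/-- Matrix Muckenhoupt class `𝒜_p`, `1 ≤ p < ∞`. -/
def MatrixAp (p : ℝ) (W : (Fin n → ℝ) → Matrix (Fin d) (Fin d) ℂ) : Prop :=
  if p = 1 then
    ∃ C : ℝ≥0∞, C ≠ ∞ ∧ ∀ (c : Fin n → ℝ) (l : ℝ), 0 < l →
      essSup (fun y => (volume (cubeC c l))⁻¹ *
          ∫⁻ x in cubeC c l, ENNReal.ofReal (matNorm (W x * mpow (W y) (-1))))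
        (volume.restrict (cubeC c l)) ≤ C
  else
    ∃ C : ℝ≥0∞, C ≠ ∞ ∧ ∀ (c : Fin n → ℝ) (l : ℝ), 0 < l →
      (volume (cubeC c l))⁻¹ * ∫⁻ x in cubeC c l,
          ((volume (cubeC c l))⁻¹ * ∫⁻ y in cubeC c l,
            ENNReal.ofReal (matNorm (mpow (W x) (1 / p) * mpow (W y) (-(1 / p)))
              ^ (p / (p - 1)))) ^ (p - 1) ≤ C

/-- `W` has `𝒜_p`-dimension (bound) `δ`. -/
def HasApDim (p : ℝ) (W : (Fin n → ℝ) → Matrix (Fin d) (Fin d) ℂ) (δ : ℝ) : Prop :=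
  if p ≤ 1 then
    ∃ C : ℝ≥0∞, C ≠ ∞ ∧ ∀ (c : Fin n → ℝ) (l : ℝ), 0 < l → ∀ i : ℕ,
      essSup (fun y => (volume (cubeC c l))⁻¹ *
          ∫⁻ x in cubeC c l,
            ENNReal.ofReal (matNorm (mpow (W x) (1 / p) * mpow (W y) (-(1 / p))) ^ p))
        (volume.restrict (cubeC c (2 ^ i * l))) ≤ C * 2 ^ ((i : ℝ) * δ)
  else
    ∃ C : ℝ≥0∞, C ≠ ∞ ∧ ∀ (c : Fin n → ℝ) (l : ℝ), 0 < l → ∀ i : ℕ,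
      (volume (cubeC c l))⁻¹ * ∫⁻ x in cubeC c l,
          ((volume (cubeC c (2 ^ i * l)))⁻¹ * ∫⁻ y in cubeC c (2 ^ i * l),
            ENNReal.ofReal (matNorm (mpow (W x) (1 / p) * mpow (W y) (-(1 / p)))
              ^ (p / (p - 1)))) ^ (p - 1) ≤ C * 2 ^ ((i : ℝ) * δ)

/-- A family of reducing operators of order `p` for `W`, over dyadic cubes. -/
def IsReducingOp (p : ℝ) (W : (Fin n → ℝ) → Matrix (Fin d) (Fin d) ℂ)
    (A : ℤ → (Fin n → ℤ) → Matrix (Fin d) (Fin d) ℂ) : Prop :=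
  (∀ j k, (A j k).PosDef) ∧
  ∃ c₁ c₂ : ℝ, 0 < c₁ ∧ 0 < c₂ ∧ ∀ (j : ℤ) (k : Fin n → ℤ) (z : Fin d → ℂ),
    c₁ * evnorm ((A j k).mulVec z) ≤
        ((volume (dyadicCube j k)).toReal⁻¹ *
          ∫ x in dyadicCube j k, evnorm ((mpow (W x) (1 / p)).mulVec z) ^ p) ^ (1 / p) ∧
    ((volume (dyadicCube j k)).toReal⁻¹ *
          ∫ x in dyadicCube j k, evnorm ((mpow (W x) (1 / p)).mulVec z) ^ p) ^ (1 / p) ≤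
      c₂ * evnorm ((A j k).mulVec z)

/-- The dyadic average operator `E_{d,a}` at scale `2^a`. -/
def dyadicAvg (a : ℤ) (f : (Fin n → ℝ) → Fin d → ℂ) (x : Fin n → ℝ) : Fin d → ℂ :=
  ⨍ y in dyadicCube (-a) (fun i => ⌊x i / (2:ℝ) ^ a⌋), f y

/-- Membership in the Bourgain-Morrey space. -/
def MemBM (W : (Fin n → ℝ) → Matrix (Fin d) (Fin d) ℂ) (p t : ℝ) (r : ℝ≥0∞)
    (f : (Fin n → ℝ) → Fin d → ℂ) : Prop :=
  AEStronglyMeasurable f (volume : Measure (Fin n → ℝ)) ∧ BMnorm W p t r f < ∞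

/-- Euclidean norm on `ℝ^n`. -/
def ernorm (x : Fin n → ℝ) : ℝ := ‖(WithLp.equiv 2 (Fin n → ℝ)).symm x‖


/-- Euclidean ball `B(0,R)` in `ℝ^n`. -/
def euclBall {n : ℕ} (R : ℝ) : Set (Fin n → ℝ) := {x | ernorm x < R}

/-- Local `L^p(W)` norm over a set `K`. -/
def locLpNorm (W : (Fin n → ℝ) → Matrix (Fin d) (Fin d) ℂ) (p : ℝ)
    (f : (Fin n → ℝ) → Fin d → ℂ) (K : Set (Fin n → ℝ)) : ℝ≥0∞ :=
  (∫⁻ x in K, ENNReal.ofReal (evnorm ((mpow (W x) (1 / p)).mulVec (f x)) ^ p)) ^ (1 / p)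

/-- Total boundedness of a family in `M_p^{t,r}(W)`. -/
def BMTotallyBounded (W : (Fin n → ℝ) → Matrix (Fin d) (Fin d) ℂ) (p t : ℝ) (r : ℝ≥0∞)
    (F : Set ((Fin n → ℝ) → Fin d → ℂ)) : Prop :=
  ∀ ε : ℝ≥0∞, 0 < ε → ∃ G : Set ((Fin n → ℝ) → Fin d → ℂ), G.Finite ∧
    ∀ f ∈ F, ∃ g ∈ G, BMnorm W p t r (fun x => f x - g x) < ε

/-!
Writing `W^{1/p} = W^{1/p-1/t} W^{1/t}` gives `|W^{1/p} f| ≤ ‖W‖^{1/p-1/t} |W^{1/t} f|` pointwise,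
and Hölder's inequality with exponents `t/(t-p)` and `t/p` turns this into
`(∫_Q |W^{1/p} f|^p)^{1/p} ≤ W(Q)^{1/p-1/t} (∫_Q |W^{1/t} f|^t)^{1/t}`, which on dyadic cubes is the
first embedding. Conversely the Morrey term of a dyadic cube `Q` bounds the `L^p(W)` norm on `Q` by
`W(Q)^{1/p-1/t}` times the Morrey norm: `W(Q)` is finite since `W` is locally integrable, and if it
vanishes then `W = 0` a.e. on `Q`. A compact set meets only finitely many unit cubes.
-/

theorem lintegral_rpow_mul_rpow_le_of_aemeasurable_left {α : Type*} [MeasurableSpace α]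
    {μ : Measure α} {f g : α → ℝ≥0∞} (hf : AEMeasurable f μ) (hf_top : ∀ x, f x ≠ ∞)
    {p q : ℝ} (hp : 0 ≤ p) (hq : 0 < q) (hpq : p + q = 1) :
    ∫⁻ x, f x ^ p * g x ^ q ∂μ ≤ (∫⁻ x, f x ∂μ) ^ p * (∫⁻ x, g x ∂μ) ^ q := by
  obtain ⟨h, hh_meas, hh_le, hh_eq⟩ :=
    exists_measurable_le_lintegral_eq μ fun x => f x ^ p * g x ^ q
  -- `g` need not be measurable: pass to a measurable `g' ≤ g` with `h ≤ f ^ p * g' ^ q`.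
  set g' : α → ℝ≥0∞ := fun x => (h x / f x ^ p) ^ (1 / q)
  have hg'_pow (x : α) : g' x ^ q = h x / f x ^ p := by
    rw [← ENNReal.rpow_mul, one_div_mul_cancel hq.ne', ENNReal.rpow_one]
  have hh_le' (x : α) : h x ≤ f x ^ p * g' x ^ q := by
    rcases eq_or_ne (f x ^ p) 0 with h0 | h0
    · simpa [h0] using hh_le x
    · rw [hg'_pow, ENNReal.mul_div_cancel h0 (ENNReal.rpow_ne_top_of_nonneg hp (hf_top x))]
  have hg'_le (x : α) : g' x ≤ g x := by
    calc g' x ≤ (g x ^ q) ^ (1 / q) :=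
          ENNReal.rpow_le_rpow (ENNReal.div_le_of_le_mul' (hh_le x)) (by positivity)
      _ = g x := by rw [← ENNReal.rpow_mul, mul_one_div_cancel hq.ne', ENNReal.rpow_one]
  have hg'_meas : AEMeasurable g' μ :=
    (hh_meas.aemeasurable.div (hf.pow_const p)).pow_const _
  calc ∫⁻ x, f x ^ p * g x ^ q ∂μ = ∫⁻ x, h x ∂μ := hh_eq
    _ ≤ ∫⁻ x, f x ^ p * g' x ^ q ∂μ := lintegral_mono hh_le'
    _ ≤ (∫⁻ x, f x ∂μ) ^ p * (∫⁻ x, g' x ∂μ) ^ q :=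
        ENNReal.lintegral_mul_norm_pow_le hf hg'_meas hp hq.le hpq
    _ ≤ (∫⁻ x, f x ∂μ) ^ p * (∫⁻ x, g x ∂μ) ^ q := by
        gcongr with x
        exact hg'_le x

theorem lintegral_biUnion_finset_le {α ι : Type*} [MeasurableSpace α] {μ : Measure α}
    (S : Finset ι) (s : ι → Set α) (f : α → ℝ≥0∞) :
    ∫⁻ x in ⋃ i ∈ S, s i, f x ∂μ ≤ ∑ i ∈ S, ∫⁻ x in s i, f x ∂μ := by
  rw [← Finset.tsum_subtype, ← Finset.set_biUnion_coe, Set.biUnion_eq_iUnion]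
  exact lintegral_iUnion_le _ _

lemma isBounded_dyadicCube (j : ℤ) (k : Fin n → ℤ) : Bornology.IsBounded (dyadicCube j k) :=
  (Metric.isBounded_Icc (fun i => (2:ℝ) ^ (-j) * k i) (fun i => (2:ℝ) ^ (-j) * (k i + 1))).subset
    fun _ hx => ⟨fun i => (hx i).1, fun i => (hx i).2.le⟩

lemma mem_dyadicCube_zero_floor (x : Fin n → ℝ) : x ∈ dyadicCube 0 (fun i => ⌊x i⌋) := by
  intro i
  simpa using And.intro (Int.floor_le (x i)) (Int.lt_floor_add_one (x i))

lemma exists_finset_subset_biUnion_dyadicCube {K : Set (Fin n → ℝ)}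
    (hK : Bornology.IsBounded K) : ∃ S : Finset (Fin n → ℤ), K ⊆ ⋃ k ∈ S, dyadicCube 0 k := by
  obtain ⟨R, hR⟩ := hK.subset_closedBall 0
  refine ⟨Finset.Icc (fun _ => -⌈R⌉) (fun _ => ⌈R⌉), fun x hx => ?_⟩
  have hxR (i : Fin n) : |x i| ≤ ⌈R⌉ := by
    calc |x i| ≤ ‖x‖ := norm_le_pi_norm x i
      _ ≤ R := by simpa using hR hx
      _ ≤ ⌈R⌉ := Int.le_ceil R
  refine Set.mem_biUnion (Finset.mem_Icc.2 ⟨fun i => ?_, fun i => ?_⟩) (mem_dyadicCube_zero_floor x)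
  · exact Int.le_floor.2 (by push_cast; linarith [neg_abs_le (x i), hxR i])
  · exact Int.floor_le_iff.2 (by linarith [le_abs_self (x i), hxR i])

section

open scoped Matrix.Norms.L2Operator MatrixOrder

lemma mpow_eq_rpow {A : Matrix (Fin d) (Fin d) ℂ} (hA : A.PosSemidef) (α : ℝ) :
    mpow A α = A ^ α := by
  rw [CFC.rpow_eq_cfc_real hA.nonneg, hA.isHermitian.cfc_eq, Matrix.IsHermitian.cfc, mpow,
    dif_pos hA.isHermitian]
  simp [Function.comp_def]

lemma mpow_add {A : Matrix (Fin d) (Fin d) ℂ} (hA : A.PosSemidef) {β γ : ℝ}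
    (hβ : 0 < β) (hγ : 0 < γ) : mpow A (β + γ) = mpow A β * mpow A γ := by
  lift β to NNReal using hβ.le
  lift γ to NNReal using hγ.le
  norm_cast at hβ hγ
  rw [mpow_eq_rpow hA, mpow_eq_rpow hA, mpow_eq_rpow hA, ← NNReal.coe_add,
    ← CFC.nnrpow_eq_rpow (add_pos hβ hγ), ← CFC.nnrpow_eq_rpow hβ, ← CFC.nnrpow_eq_rpow hγ,
    CFC.nnrpow_add hβ hγ]

lemma matNorm_mpow {A : Matrix (Fin d) (Fin d) ℂ} (hA : A.PosSemidef) {α : ℝ} (hα : 0 < α) :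
    matNorm (mpow A α) = matNorm A ^ α := by
  rw [mpow_eq_rpow hA]
  exact CFC.norm_rpow A hα hA.nonneg

lemma evnorm_nonneg (v : Fin d → ℂ) : 0 ≤ evnorm v := norm_nonneg _

lemma matNorm_nonneg (A : Matrix (Fin d) (Fin d) ℂ) : 0 ≤ matNorm A := norm_nonneg _

lemma evnorm_mulVec_le (A : Matrix (Fin d) (Fin d) ℂ) (v : Fin d → ℂ) :
    evnorm (A *ᵥ v) ≤ matNorm A * evnorm v :=
  (Matrix.toEuclideanCLM (𝕜 := ℂ) A).le_opNorm (WithLp.toLp 2 v)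

lemma evnorm_mpow_mulVec_le {A : Matrix (Fin d) (Fin d) ℂ} (hA : A.PosSemidef) {α : ℝ}
    (hα : 0 < α) (v : Fin d → ℂ) : evnorm (mpow A α *ᵥ v) ≤ matNorm A ^ α * evnorm v :=
  matNorm_mpow hA hα ▸ evnorm_mulVec_le _ v

lemma evnorm_mpow_add_mulVec_le {A : Matrix (Fin d) (Fin d) ℂ} (hA : A.PosSemidef) {β γ : ℝ}
    (hβ : 0 < β) (hγ : 0 < γ) (v : Fin d → ℂ) :
    evnorm (mpow A (β + γ) *ᵥ v) ≤ matNorm A ^ β * evnorm (mpow A γ *ᵥ v) := by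
  rw [mpow_add hA hβ hγ, ← Matrix.mulVec_mulVec]
  exact evnorm_mpow_mulVec_le hA hβ _

namespace IsMatrixWeight

variable {W : (Fin n → ℝ) → Matrix (Fin d) (Fin d) ℂ}

lemma locallyIntegrable (hW : IsMatrixWeight W) : LocallyIntegrable W volume := by
  have hsingle : ∀ i j, LocallyIntegrable (fun x => Matrix.single i j (W x i j)) volume := by
    intro i j
    rw [locallyIntegrable_iff]
    intro K hK
    have := ((hW.locInt i j).integrableOn_isCompact hK).smul_const (Matrix.single i j (1 : ℂ))
    simp only [Matrix.smul_single, smul_eq_mul, mul_one] at this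
    exact this
  have hsum : LocallyIntegrable (fun x => ∑ i, ∑ j, Matrix.single i j (W x i j)) volume :=
    locallyIntegrable_finsetSum _ fun i _ => locallyIntegrable_finsetSum _ fun j _ => hsingle i j
  simpa only [← Matrix.matrix_eq_sum_single] using hsum

lemma aemeasurable_ofReal_matNorm (hW : IsMatrixWeight W) :
    AEMeasurable (fun x => ENNReal.ofReal (matNorm (W x))) volume :=
  hW.locallyIntegrable.aestronglyMeasurable.norm.aemeasurable.ennreal_ofReal

lemma cubeWeight_lt_top (hW : IsMatrixWeight W) {Q : Set (Fin n → ℝ)}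
    (hQ : Bornology.IsBounded Q) : cubeWeight W Q < ∞ := by
  calc cubeWeight W Q ≤ ∫⁻ y in closure Q, ‖W y‖ₑ := by
        simp only [cubeWeight, matNorm, ← Matrix.cstar_norm_def, ofReal_norm]
        exact lintegral_mono_set subset_closure
    _ < ∞ := (hW.locallyIntegrable.integrableOn_isCompact hQ.isCompact_closure).2

end IsMatrixWeight

end

section locLpNorm

variable {W : (Fin n → ℝ) → Matrix (Fin d) (Fin d) ℂ} {p t : ℝ} {f : (Fin n → ℝ) → Fin d → ℂ}

lemma locLpNorm_mono {K K' : Set (Fin n → ℝ)} (hp : 0 < p) (h : K ⊆ K') :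
    locLpNorm W p f K ≤ locLpNorm W p f K' :=
  ENNReal.rpow_le_rpow (lintegral_mono_set h) (by positivity)

lemma locLpNorm_rpow (hp : p ≠ 0) (K : Set (Fin n → ℝ)) :
    locLpNorm W p f K ^ p =
      ∫⁻ x in K, ENNReal.ofReal (evnorm ((mpow (W x) (1 / p)).mulVec (f x)) ^ p) := by
  rw [locLpNorm, one_div, ENNReal.rpow_inv_rpow hp]

lemma locLpNorm_biUnion_le {ι : Type*} (hp : 0 < p) (S : Finset ι) (Q : ι → Set (Fin n → ℝ))
    (c : ι → ℝ≥0∞) (B : ℝ≥0∞) (h : ∀ k ∈ S, locLpNorm W p f (Q k) ≤ c k * B) :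
    locLpNorm W p f (⋃ k ∈ S, Q k) ≤ (∑ k ∈ S, c k ^ p) ^ (1 / p) * B := by
  calc locLpNorm W p f (⋃ k ∈ S, Q k) ≤ (∑ k ∈ S, locLpNorm W p f (Q k) ^ p) ^ (1 / p) := by
        simp only [locLpNorm_rpow hp.ne']
        exact ENNReal.rpow_le_rpow (lintegral_biUnion_finset_le _ _ _) (by positivity)
    _ ≤ (∑ k ∈ S, (c k * B) ^ p) ^ (1 / p) := by
        gcongr with k hk
        exact h k hk
    _ = (∑ k ∈ S, c k ^ p) ^ (1 / p) * B := by
        simp_rw [ENNReal.mul_rpow_of_nonneg _ _ hp.le, ← Finset.sum_mul]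
        rw [ENNReal.mul_rpow_of_nonneg _ _ (by positivity), ← ENNReal.rpow_mul,
          mul_one_div_cancel hp.ne', ENNReal.rpow_one]

end locLpNorm

lemma BMnorm_top (W : (Fin n → ℝ) → Matrix (Fin d) (Fin d) ℂ) (p t : ℝ)
    (f : (Fin n → ℝ) → Fin d → ℂ) :
    BMnorm W p t ∞ f = ⨆ jk : ℤ × (Fin n → ℤ), BMterm W p t f jk.1 jk.2 :=
  if_pos rfl

namespace IsMatrixWeight

variable {W : (Fin n → ℝ) → Matrix (Fin d) (Fin d) ℂ} {p t : ℝ} {f : (Fin n → ℝ) → Fin d → ℂ}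

lemma locLpNorm_eq_zero_of_cubeWeight_eq_zero (hW : IsMatrixWeight W) (hp : 0 < p)
    {Q : Set (Fin n → ℝ)} (hQ : cubeWeight W Q = 0) : locLpNorm W p f Q = 0 := by
  rw [cubeWeight, lintegral_eq_zero_iff' hW.aemeasurable_ofReal_matNorm.restrict] at hQ
  have hint : ∫⁻ y in Q, ENNReal.ofReal (evnorm ((mpow (W y) (1 / p)).mulVec (f y)) ^ p) = 0 := by
    refine (lintegral_congr_ae ?_).trans lintegral_zero
    filter_upwards [hQ] with y hy
    have hm : matNorm (W y) = 0 := le_antisymm (ENNReal.ofReal_eq_zero.1 hy) (matNorm_nonneg _)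
    have he : evnorm ((mpow (W y) (1 / p)).mulVec (f y)) = 0 := by
      have := evnorm_mpow_mulVec_le (hW.posSemidef y) (one_div_pos.2 hp) (f y)
      rw [hm, Real.zero_rpow (one_div_pos.2 hp).ne', zero_mul] at this
      exact le_antisymm this (evnorm_nonneg _)
    rw [he, Real.zero_rpow hp.ne', ENNReal.ofReal_zero]
  rw [locLpNorm, hint, ENNReal.zero_rpow_of_pos (by positivity)]

lemma locLpNorm_le_cubeWeight_rpow_mul_locLpNorm (hW : IsMatrixWeight W) (hp : 0 < p)
    (hpt : p ≤ t) (f : (Fin n → ℝ) → Fin d → ℂ) (Q : Set (Fin n → ℝ)) :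
    locLpNorm W p f Q ≤ cubeWeight W Q ^ (1 / p - 1 / t) * locLpNorm W t f Q := by
  rcases hpt.eq_or_lt with rfl | hpt
  · simp
  have ht : 0 < t := hp.trans hpt
  have hθ : p / t < 1 := (div_lt_one ht).2 hpt
  have hpoint (y : Fin n → ℝ) :
      ENNReal.ofReal (evnorm ((mpow (W y) (1 / p)).mulVec (f y)) ^ p) ≤
        ENNReal.ofReal (matNorm (W y)) ^ (1 - p / t) *
          ENNReal.ofReal (evnorm ((mpow (W y) (1 / t)).mulVec (f y)) ^ t) ^ (p / t) := by
    have hsplit : evnorm ((mpow (W y) (1 / p)).mulVec (f y)) ≤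
        matNorm (W y) ^ (1 / p - 1 / t) * evnorm ((mpow (W y) (1 / t)).mulVec (f y)) := by
      simpa using evnorm_mpow_add_mulVec_le (hW.posSemidef y)
        (sub_pos.2 (one_div_lt_one_div_of_lt hp hpt)) (one_div_pos.2 ht) (f y)
    rw [ENNReal.ofReal_rpow_of_nonneg (matNorm_nonneg _) (by linarith),
      ENNReal.ofReal_rpow_of_nonneg (Real.rpow_nonneg (evnorm_nonneg _) _) (by positivity),
      ← ENNReal.ofReal_mul (Real.rpow_nonneg (matNorm_nonneg _) _)]
    refine ENNReal.ofReal_le_ofReal ?_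
    calc evnorm ((mpow (W y) (1 / p)).mulVec (f y)) ^ p
        ≤ (matNorm (W y) ^ (1 / p - 1 / t) * evnorm ((mpow (W y) (1 / t)).mulVec (f y))) ^ p :=
          Real.rpow_le_rpow (evnorm_nonneg _) hsplit hp.le
      _ = matNorm (W y) ^ (1 - p / t) *
            (evnorm ((mpow (W y) (1 / t)).mulVec (f y)) ^ t) ^ (p / t) := by
          rw [Real.mul_rpow (Real.rpow_nonneg (matNorm_nonneg _) _) (evnorm_nonneg _),
            ← Real.rpow_mul (matNorm_nonneg _), ← Real.rpow_mul (evnorm_nonneg _)]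
          congr 2 <;> field_simp
  have hHolder := (lintegral_mono hpoint).trans
    (lintegral_rpow_mul_rpow_le_of_aemeasurable_left (μ := volume.restrict Q)
      hW.aemeasurable_ofReal_matNorm.restrict (fun _ => ENNReal.ofReal_ne_top)
      (by linarith) (by positivity) (by ring))
  calc locLpNorm W p f Q
      ≤ (cubeWeight W Q ^ (1 - p / t) * (locLpNorm W t f Q ^ t) ^ (p / t)) ^ (1 / p) := by
        rw [locLpNorm_rpow ht.ne']
        exact ENNReal.rpow_le_rpow hHolder (by positivity)
    _ = cubeWeight W Q ^ (1 / p - 1 / t) * locLpNorm W t f Q := by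
        rw [ENNReal.mul_rpow_of_nonneg _ _ (by positivity), ← ENNReal.rpow_mul, ← ENNReal.rpow_mul,
          ← ENNReal.rpow_mul, show t * (p / t * (1 / p)) = 1 by field_simp, ENNReal.rpow_one,
          show (1 - p / t) * (1 / p) = 1 / p - 1 / t by field_simp]

lemma BMterm_le_locLpNorm (hW : IsMatrixWeight W) (hp : 0 < p) (hpt : p ≤ t) (j : ℤ)
    (k : Fin n → ℤ) : BMterm W p t f j k ≤ locLpNorm W t f (dyadicCube j k) := by
  calc BMterm W p t f j k
      ≤ cubeWeight W (dyadicCube j k) ^ (1 / t - 1 / p) *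
          (cubeWeight W (dyadicCube j k) ^ (1 / p - 1 / t) * locLpNorm W t f (dyadicCube j k)) :=
        mul_le_mul_right (hW.locLpNorm_le_cubeWeight_rpow_mul_locLpNorm hp hpt f _) _
    _ ≤ 1 * locLpNorm W t f (dyadicCube j k) := by
        rw [← mul_assoc, show 1 / t - 1 / p = -(1 / p - 1 / t) by ring, ENNReal.rpow_neg]
        exact mul_le_mul_left (ENNReal.inv_mul_le_one _) _
    _ = locLpNorm W t f (dyadicCube j k) := one_mul _

lemma locLpNorm_dyadicCube_le (hW : IsMatrixWeight W) (hp : 0 < p) (j : ℤ) (k : Fin n → ℤ) :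
    locLpNorm W p f (dyadicCube j k) ≤
      cubeWeight W (dyadicCube j k) ^ (1 / p - 1 / t) * BMnorm W p t ∞ f := by
  set WQ := cubeWeight W (dyadicCube j k)
  rcases eq_or_ne WQ 0 with h0 | h0
  · rw [hW.locLpNorm_eq_zero_of_cubeWeight_eq_zero hp h0]
    exact zero_le
  have htop : WQ ≠ ∞ := (hW.cubeWeight_lt_top (isBounded_dyadicCube j k)).ne
  calc locLpNorm W p f (dyadicCube j k) = WQ ^ (1 / p - 1 / t) * BMterm W p t f j k := by
        rw [BMterm, ← mul_assoc, ← ENNReal.rpow_add _ _ h0 htop,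
          show 1 / p - 1 / t + (1 / t - 1 / p) = 0 by ring, ENNReal.rpow_zero, one_mul, locLpNorm]
    _ ≤ WQ ^ (1 / p - 1 / t) * BMnorm W p t ∞ f := by
        rw [BMnorm_top]
        exact mul_le_mul_right (le_iSup (fun jk : ℤ × (Fin n → ℤ) => BMterm W p t f jk.1 jk.2)
          (j, k)) _

theorem BMnorm_le_locLpNorm_univ (hW : IsMatrixWeight W) (hp : 0 < p) (hpt : p ≤ t)
    (f : (Fin n → ℝ) → Fin d → ℂ) : BMnorm W p t ∞ f ≤ locLpNorm W t f Set.univ := by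
  rw [BMnorm_top]
  exact iSup_le fun jk => (hW.BMterm_le_locLpNorm hp hpt jk.1 jk.2).trans
    (locLpNorm_mono (hp.trans_le hpt) (Set.subset_univ _))

theorem exists_locLpNorm_le_BMnorm (hW : IsMatrixWeight W) (hp : 0 < p) (hpt : p ≤ t)
    {K : Set (Fin n → ℝ)} (hK : Bornology.IsBounded K) :
    ∃ C : ℝ≥0∞, C ≠ ∞ ∧ ∀ f : (Fin n → ℝ) → Fin d → ℂ,
      locLpNorm W p f K ≤ C * BMnorm W p t ∞ f := by
  obtain ⟨S, hS⟩ := exists_finset_subset_biUnion_dyadicCube hK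
  have hexp : 0 ≤ 1 / p - 1 / t := sub_nonneg.2 (one_div_le_one_div_of_le hp hpt)
  refine ⟨(∑ k ∈ S, (cubeWeight W (dyadicCube 0 k) ^ (1 / p - 1 / t)) ^ p) ^ (1 / p), ?_,
    fun f => (locLpNorm_mono hp hS).trans <|
      locLpNorm_biUnion_le hp S _ _ _ fun k _ => hW.locLpNorm_dyadicCube_le hp 0 k⟩
  refine ENNReal.rpow_ne_top_of_nonneg (by positivity) (ENNReal.sum_ne_top.2 fun k _ => ?_)
  exact ENNReal.rpow_ne_top_of_nonneg hp.le <| ENNReal.rpow_ne_top_of_nonneg hexp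
    (hW.cubeWeight_lt_top (isBounded_dyadicCube 0 k)).ne

end IsMatrixWeight

/-- `L^t(W) ↪ M_p^{t,∞}(W) ↪ L^p_loc(W)` for `0 < p ≤ t < ∞`. -/
theorem stmt6 {n d : ℕ} (W : (Fin n → ℝ) → Matrix (Fin d) (Fin d) ℂ)
    (hW : IsMatrixWeight W) (p t : ℝ) (hp : 0 < p) (hpt : p ≤ t) :
    (∃ C : ℝ≥0∞, C ≠ ∞ ∧ ∀ f : (Fin n → ℝ) → Fin d → ℂ,
      BMnorm W p t ∞ f ≤ C *
        (∫⁻ x, ENNReal.ofReal (evnorm ((mpow (W x) (1 / t)).mulVec (f x)) ^ t)) ^ (1 / t)) ∧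
    (∀ K : Set (Fin n → ℝ), IsCompact K → ∃ C : ℝ≥0∞, C ≠ ∞ ∧ ∀ f : (Fin n → ℝ) → Fin d → ℂ,
      locLpNorm W p f K ≤ C * BMnorm W p t ∞ f) := by
  refine ⟨⟨1, one_ne_top, fun f => ?_⟩,
    fun K hK => hW.exists_locLpNorm_le_BMnorm hp hpt hK.isBounded⟩
  rw [one_mul, ← setLIntegral_univ]
  exact hW.BMnorm_le_locLpNorm_univ hp hpt f
end
end

section
/- Let 0 < p < t < ∞ and f(x) = |x|^{-n/t} on ℝⁿ. Then f belongs to the unweighted Bourgain-Morrey space M_p^{t,∞} with ‖f‖_{M_p^{t,∞}} ≈ 1, and there is a constant c > 0 such that for every j ∈ ℕ, ‖f − χ_{B(0,2^j)} f‖_{M_p^{t,∞}} ≥ c. Consequently the singleton {f}, though totally bounded in M_p^{t,∞}, does not uniformly vanish at infinity. -/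
open MeasureTheory ENNReal Matrix
open scoped ENNReal ComplexOrder

noncomputable section

variable {n d : ℕ}

/-- The unweighted scalar Bourgain-Morrey `M_p^{t,∞}` norm. -/
def BMnormS {n : ℕ} (p t : ℝ) (f : (Fin n → ℝ) → ℝ) : ℝ≥0∞ :=
  ⨆ jk : ℤ × (Fin n → ℤ),
    volume (dyadicCube jk.1 jk.2) ^ (1 / t - 1 / p) *
      (∫⁻ x in dyadicCube jk.1 jk.2, ENNReal.ofReal (|f x| ^ p)) ^ (1 / p)

/-!
The function `f = |x|^{-n/t}` is invariant under the scaling of `M_p^{t,∞}`: on a dyadic cube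
`Q` of side `L` one has `∫_Q |f|^p ≤ C L^{n - np/t}`, because `|x|^{-np/t}` is bounded by
`L^{-np/t}` off the ball `B(0, L)` and, by scaling, its integral over that ball is
`L^{n - np/t}` times its (finite, as `np/t < n`) integral over the unit ball. Hence every
term of the norm is at most `C^{1/p}`. Conversely, on the dyadic cube `[2^m, 2^{m+1})^n`
one has `|f| ≥ (2√n)^{-n/t} 2^{-mn/t}`, so the term of that cube is at least `(2√n)^{-n/t}`;
choosing `2^m > R` puts the cube outside `B(0, R)`, so no tail `χ_{B(0,R)^c} f` is small.
-/

section AddHaar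

open Metric Module

variable {E : Type*} [NormedAddCommGroup E] [NormedSpace ℝ E] [FiniteDimensional ℝ E]
  [MeasurableSpace E] [BorelSpace E] (μ : Measure E) [μ.IsAddHaarMeasure]

theorem setIntegral_ball_rpow_neg_norm (β : ℝ) {R : ℝ} (hR : 0 < R) :
    ∫ x in ball 0 R, ‖x‖ ^ (-β) ∂μ =
      R ^ ((finrank ℝ E : ℝ) - β) * ∫ x in ball 0 1, ‖x‖ ^ (-β) ∂μ := by
  have hscale :=
    Measure.setIntegral_comp_smul_of_pos μ (fun x : E => ‖x‖ ^ (-β)) (ball 0 1) hR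
  simp only [norm_smul, Real.norm_of_nonneg hR.le, smul_unitBall_of_pos hR, smul_eq_mul,
    Real.mul_rpow hR.le (norm_nonneg _), integral_const_mul] at hscale
  have hRd : R ^ finrank ℝ E ≠ 0 := pow_ne_zero _ hR.ne'
  rw [Real.rpow_sub hR, Real.rpow_natCast, div_eq_mul_inv, ← Real.rpow_neg hR.le, mul_assoc,
    hscale, mul_inv_cancel_left₀ hRd]

theorem lintegral_ball_rpow_neg_norm (hd : 1 ≤ finrank ℝ E) {β : ℝ}
    (hβ : β < finrank ℝ E) {R : ℝ} (hR : 0 < R) :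
    ∫⁻ x in ball 0 R, ENNReal.ofReal (‖x‖ ^ (-β)) ∂μ =
      ENNReal.ofReal (R ^ ((finrank ℝ E : ℝ) - β)) *
        ENNReal.ofReal (∫ x in ball 0 1, ‖x‖ ^ (-β) ∂μ) := by
  have hint : IntegrableOn (fun x : E => ‖x‖ ^ (-β)) (ball 0 R) μ :=
    integrableOn_ball_of_norm_le_rpow hd hβ (C := 1)
      (Filter.Eventually.of_forall fun x => by
        rw [one_mul, Real.norm_of_nonneg (by positivity)])
      (continuous_norm.measurable.pow_const _).aestronglyMeasurable
  rw [← ofReal_integral_eq_lintegral_ofReal hint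
      (Filter.Eventually.of_forall fun x => by positivity),
    setIntegral_ball_rpow_neg_norm μ β hR, ENNReal.ofReal_mul (by positivity)]

theorem lintegral_rpow_neg_norm_le_of_measure_le (hd : 1 ≤ finrank ℝ E) {β : ℝ}
    (hβ0 : 0 ≤ β) (hβ : β < finrank ℝ E) {s : Set E} {L : ℝ} (hL : 0 < L)
    (hs : μ s ≤ ENNReal.ofReal (L ^ finrank ℝ E)) :
    ∫⁻ x in s, ENNReal.ofReal (‖x‖ ^ (-β)) ∂μ ≤
      (ENNReal.ofReal (∫ x in ball 0 1, ‖x‖ ^ (-β) ∂μ) + 1) *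
        ENNReal.ofReal (L ^ ((finrank ℝ E : ℝ) - β)) := by
  set g : E → ENNReal := fun x => ENNReal.ofReal (‖x‖ ^ (-β))
  have hsplit : ∀ x, g x ≤ (ball 0 L).indicator g x + ENNReal.ofReal (L ^ (-β)) := by
    intro x
    by_cases hx : x ∈ ball 0 L
    · simp [Set.indicator_of_mem hx]
    · rw [Set.indicator_of_notMem hx, zero_add]
      exact ENNReal.ofReal_le_ofReal (Real.rpow_le_rpow_of_nonpos hL
        (by simpa using hx) (neg_nonpos.2 hβ0))
  calc ∫⁻ x in s, g x ∂μ
      ≤ ∫⁻ x in s, (ball 0 L).indicator g x + ENNReal.ofReal (L ^ (-β)) ∂μ :=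
        lintegral_mono hsplit
    _ = ∫⁻ x in s, (ball 0 L).indicator g x ∂μ + ENNReal.ofReal (L ^ (-β)) * μ s := by
        rw [lintegral_add_right _ measurable_const, setLIntegral_const]
    _ ≤ ∫⁻ x in ball 0 L, g x ∂μ +
          ENNReal.ofReal (L ^ (-β)) * ENNReal.ofReal (L ^ finrank ℝ E) := by
        refine add_le_add ?_ (mul_le_mul_right hs _)
        rw [← lintegral_indicator measurableSet_ball]
        exact setLIntegral_le_lintegral _ _
    _ = _ := by
        rw [lintegral_ball_rpow_neg_norm μ hd hβ hL,
          ← ENNReal.ofReal_mul (by positivity : (0:ℝ) ≤ L ^ (-β)),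
          ← Real.rpow_natCast, ← Real.rpow_add hL, neg_add_eq_sub, add_mul, one_mul, mul_comm]

end AddHaar

section BourgainMorrey

variable {n : ℕ}

theorem dyadicCube_eq_pi (j : ℤ) (k : Fin n → ℤ) :
    dyadicCube j k =
      Set.univ.pi fun i => Set.Ico ((2:ℝ) ^ (-j) * k i) ((2:ℝ) ^ (-j) * (k i + 1)) := by
  ext x; simp [dyadicCube, Set.mem_pi]

theorem volume_dyadicCube (j : ℤ) (k : Fin n → ℤ) :
    volume (dyadicCube j k) = ENNReal.ofReal (((2:ℝ) ^ (-j)) ^ n) := by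
  simp only [dyadicCube_eq_pi, volume_pi_pi, Real.volume_Ico, ← mul_sub, add_sub_cancel_left,
    mul_one, Finset.prod_const, Finset.card_univ, Fintype.card_fin]
  rw [ENNReal.ofReal_pow (by positivity)]

theorem measurableSet_dyadicCube (j : ℤ) (k : Fin n → ℤ) :
    MeasurableSet (dyadicCube j k) := by
  rw [dyadicCube_eq_pi]
  exact MeasurableSet.univ_pi fun _ => measurableSet_Ico

theorem le_BMnormS (p t : ℝ) (f : (Fin n → ℝ) → ℝ) (j : ℤ) (k : Fin n → ℤ) :
    volume (dyadicCube j k) ^ (1 / t - 1 / p) *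
      (∫⁻ x in dyadicCube j k, ENNReal.ofReal (|f x| ^ p)) ^ (1 / p) ≤ BMnormS p t f :=
  le_iSup (fun jk : ℤ × (Fin n → ℤ) => volume (dyadicCube jk.1 jk.2) ^ (1 / t - 1 / p) *
      (∫⁻ x in dyadicCube jk.1 jk.2, ENNReal.ofReal (|f x| ^ p)) ^ (1 / p)) (j, k)

theorem BMnormS_mono {p t : ℝ} (hp : 0 ≤ p) {f g : (Fin n → ℝ) → ℝ}
    (h : ∀ x, |f x| ≤ |g x|) :
    BMnormS p t f ≤ BMnormS p t g := by
  refine iSup_mono fun jk => ?_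
  gcongr _ * (∫⁻ x in _, ENNReal.ofReal (?_ ^ p)) ^ _ with x
  exact h x

theorem BMnormS_le_of_lintegral_le {p t : ℝ} (hp : 0 < p) {f : (Fin n → ℝ) → ℝ}
    {C : ℝ≥0∞}
    (h : ∀ j k, ∫⁻ x in dyadicCube j k, ENNReal.ofReal (|f x| ^ p) ≤
      C * ENNReal.ofReal (((2:ℝ) ^ (-j)) ^ ((n:ℝ) - n * p / t))) :
    BMnormS p t f ≤ C ^ (1 / p) := by
  refine iSup_le fun ⟨j, k⟩ => ?_
  have hL : (0:ℝ) < 2 ^ (-j) := by positivity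
  set a := ENNReal.ofReal (2 ^ (-j))
  have ha0 : a ≠ 0 := ENNReal.ofReal_pos.2 hL |>.ne'
  calc volume (dyadicCube j k) ^ (1 / t - 1 / p) *
        (∫⁻ x in dyadicCube j k, ENNReal.ofReal (|f x| ^ p)) ^ (1 / p)
      ≤ (a ^ n) ^ (1 / t - 1 / p) * (C * a ^ ((n:ℝ) - n * p / t)) ^ (1 / p) := by
        rw [volume_dyadicCube, ENNReal.ofReal_pow hL.le, ENNReal.ofReal_rpow_of_pos hL]
        gcongr
        exact h j k
    _ = C ^ (1 / p) * a ^ ((n:ℝ) * (1 / t - 1 / p) + ((n:ℝ) - n * p / t) * (1 / p)) := by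
        rw [ENNReal.mul_rpow_of_nonneg _ _ (by positivity), ← ENNReal.rpow_natCast,
          ← ENNReal.rpow_mul, ← ENNReal.rpow_mul,
          ENNReal.rpow_add _ _ ha0 ENNReal.ofReal_ne_top]
        ring
    _ = C ^ (1 / p) := by
        rw [show (n:ℝ) * (1 / t - 1 / p) + ((n:ℝ) - n * p / t) * (1 / p) = 0 by
          field_simp; ring, ENNReal.rpow_zero, mul_one]

theorem le_BMnormS_of_le_abs {p t : ℝ} (hp : 0 < p) {f : (Fin n → ℝ) → ℝ} {c : ℝ}
    (hc : 0 ≤ c) (j : ℤ) (k : Fin n → ℤ)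
    (h : ∀ x ∈ dyadicCube j k, c * ((2:ℝ) ^ (-j)) ^ (-((n:ℝ) / t)) ≤ |f x|) :
    ENNReal.ofReal c ≤ BMnormS p t f := by
  have hL : (0:ℝ) < 2 ^ (-j) := by positivity
  set L : ℝ := 2 ^ (-j)
  set m := c * L ^ (-((n:ℝ) / t))
  have hm : 0 ≤ m := by positivity
  have hint : ENNReal.ofReal (m ^ p * L ^ n) ≤
      ∫⁻ x in dyadicCube j k, ENNReal.ofReal (|f x| ^ p) := by
    rw [ENNReal.ofReal_mul (by positivity), ← volume_dyadicCube, ← setLIntegral_const]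
    exact setLIntegral_mono_ae' (measurableSet_dyadicCube j k) (Filter.Eventually.of_forall
      fun x hx => ENNReal.ofReal_le_ofReal (Real.rpow_le_rpow hm (h x hx) hp.le))
  have hscale : (L ^ n) ^ (1 / t - 1 / p) * (m ^ p * L ^ n) ^ (1 / p) = c := by
    rw [Real.mul_rpow (by positivity) (by positivity), one_div p, Real.rpow_rpow_inv hm hp.ne',
      mul_left_comm, ← Real.rpow_add (by positivity), sub_add_cancel, ← Real.rpow_natCast,
      ← Real.rpow_mul hL.le, mul_one_div, mul_assoc, ← Real.rpow_add hL, neg_add_cancel,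
      Real.rpow_zero, mul_one]
  calc ENNReal.ofReal c
      = ENNReal.ofReal (L ^ n) ^ (1 / t - 1 / p) * ENNReal.ofReal (m ^ p * L ^ n) ^ (1 / p) := by
        rw [ENNReal.ofReal_rpow_of_pos (by positivity),
          ENNReal.ofReal_rpow_of_nonneg (by positivity) (by positivity),
          ← ENNReal.ofReal_mul (by positivity), hscale]
    _ ≤ _ := by
        refine le_trans ?_ (le_BMnormS p t f j k)
        rw [volume_dyadicCube]
        gcongr

end BourgainMorrey

section PowerFunction

open Metric Module

variable {n : ℕ}

theorem ernorm_nonneg (x : Fin n → ℝ) : 0 ≤ ernorm x := norm_nonneg _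

theorem norm_le_ernorm (x : Fin n → ℝ) : ‖x‖ ≤ ernorm x :=
  pi_norm_le_iff_of_nonneg (norm_nonneg _) |>.2 fun i => PiLp.norm_apply_le (WithLp.toLp 2 x) i

theorem ernorm_le_sqrt_mul_norm (x : Fin n → ℝ) : ernorm x ≤ √n * ‖x‖ := by
  rw [ernorm, ← Real.sqrt_sq (norm_nonneg x), ← Real.sqrt_mul n.cast_nonneg,
    EuclideanSpace.norm_eq]
  refine Real.sqrt_le_sqrt ?_
  calc ∑ i, ‖x i‖ ^ 2 ≤ ∑ _i : Fin n, ‖x‖ ^ 2 := by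
        gcongr with i
        exact norm_le_pi_norm x i
    _ = n * ‖x‖ ^ 2 := by simp

theorem abs_ernorm_rpow_neg_rpow_le (x : Fin n → ℝ) {p t : ℝ} (hp : 0 ≤ p) (ht : 0 ≤ t) :
    |ernorm x ^ (-((n:ℝ) / t))| ^ p ≤ ‖x‖ ^ (-((n:ℝ) * p / t)) := by
  rw [abs_of_nonneg (Real.rpow_nonneg (ernorm_nonneg x) _), ← Real.rpow_mul (ernorm_nonneg x),
    show -((n:ℝ) / t) * p = -((n:ℝ) * p / t) by ring]
  rcases eq_or_ne x 0 with rfl | hx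
  · simp [ernorm]
  · exact Real.rpow_le_rpow_of_nonpos (norm_pos_iff.2 hx) (norm_le_ernorm x)
      (by rw [neg_nonpos]; positivity)

theorem BMnormS_rpow_neg_ernorm_le (hn : 0 < n) {p t : ℝ} (hp : 0 < p) (hpt : p < t) :
    BMnormS p t (fun x : Fin n → ℝ => ernorm x ^ (-((n:ℝ) / t))) ≤
      (ENNReal.ofReal (∫ x in ball (0 : Fin n → ℝ) 1, ‖x‖ ^ (-((n:ℝ) * p / t))) + 1) ^
        (1 / p) := by
  have ht : 0 < t := hp.trans hpt
  have hd : finrank ℝ (Fin n → ℝ) = n := finrank_fin_fun ℝ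
  have hβ : (n:ℝ) * p / t < n := by
    rw [div_lt_iff₀ ht]; exact mul_lt_mul_of_pos_left hpt (Nat.cast_pos.2 hn)
  refine BMnormS_le_of_lintegral_le hp fun j k => ?_
  have hcube := lintegral_rpow_neg_norm_le_of_measure_le volume (by rw [hd]; exact hn)
    (β := n * p / t) (by positivity) (by rw [hd]; exact hβ) (s := dyadicCube j k)
    (L := 2 ^ (-j)) (by positivity) (by rw [hd, volume_dyadicCube])
  rw [hd] at hcube
  exact (lintegral_mono fun x => ENNReal.ofReal_le_ofReal
    (abs_ernorm_rpow_neg_rpow_le x hp.le ht.le)).trans hcube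

theorem le_BMnormS_indicator_compl_euclBall (hn : 0 < n) {p t : ℝ} (hp : 0 < p) (ht : 0 ≤ t)
    (R : ℝ) :
    ENNReal.ofReal ((2 * √n) ^ (-((n:ℝ) / t))) ≤
      BMnormS p t ((euclBall (n := n) R)ᶜ.indicator fun x => ernorm x ^ (-((n:ℝ) / t))) := by
  obtain ⟨m, hm⟩ := pow_unbounded_of_one_lt R one_lt_two
  refine le_BMnormS_of_le_abs hp (by positivity) (-m) (fun _ => 1) fun x hx => ?_
  simp only [dyadicCube, neg_neg, zpow_natCast, Int.cast_one, mul_one, Set.mem_ofPred_eq] at hx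
  have h2m : (0:ℝ) < 2 ^ m := by positivity
  have hlow : (2:ℝ) ^ m ≤ ernorm x :=
    (hx ⟨0, hn⟩).1.trans <| (le_abs_self _).trans <|
      (norm_le_pi_norm x _).trans (norm_le_ernorm x)
  have hup : ernorm x ≤ 2 * √n * 2 ^ m := by
    refine (ernorm_le_sqrt_mul_norm x).trans ?_
    rw [mul_comm 2, mul_assoc]
    gcongr
    refine pi_norm_le_iff_of_nonneg (by positivity) |>.2 fun i => ?_
    rw [Real.norm_eq_abs, abs_le]
    constructor <;> linarith [hx i]
  have hout : x ∈ (euclBall (n := n) R)ᶜ := fun h => (hm.trans_le hlow).not_gt h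
  rw [neg_neg, zpow_natCast, Set.indicator_of_mem hout,
    abs_of_nonneg (Real.rpow_nonneg (ernorm_nonneg x) _),
    ← Real.mul_rpow (by positivity) h2m.le]
  exact Real.rpow_le_rpow_of_nonpos (h2m.trans_le hlow) hup (by rw [neg_nonpos]; positivity)

end PowerFunction

/-- `f(x) = |x|^{-n/t}` has `‖f‖_{M_p^{t,∞}} ≈ 1`, yet its tails
`f − χ_{B(0,2^j)} f` have `M_p^{t,∞}` norm bounded below; hence `{f}` does not
uniformly vanish at infinity. -/
theorem stmt19 {n : ℕ} (hn : 0 < n) (p t : ℝ) (hp : 0 < p) (hpt : p < t) :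
    (∃ c₁ c₂ : ℝ≥0∞, 0 < c₁ ∧ c₂ < ∞ ∧
      c₁ ≤ BMnormS p t (fun x : Fin n → ℝ => ernorm x ^ (-((n : ℝ) / t))) ∧
      BMnormS p t (fun x : Fin n → ℝ => ernorm x ^ (-((n : ℝ) / t))) ≤ c₂) ∧
    (∃ c : ℝ≥0∞, 0 < c ∧ ∀ j : ℕ,
      c ≤ BMnormS p t (fun x : Fin n → ℝ =>
        ernorm x ^ (-((n : ℝ) / t)) -
          (euclBall (n := n) (2 ^ j)).indicator
            (fun x => ernorm x ^ (-((n : ℝ) / t))) x)) ∧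
    ¬ Filter.Tendsto
        (fun R : ℝ => BMnormS p t
          ((euclBall (n := n) R)ᶜ.indicator
            (fun x => ernorm x ^ (-((n : ℝ) / t)))))
        Filter.atTop (nhds 0) := by
  have ht : 0 < t := hp.trans hpt
  have hc : 0 < ENNReal.ofReal ((2 * √n) ^ (-((n:ℝ) / t))) := by
    have : (0:ℝ) < n := Nat.cast_pos.2 hn
    positivity
  have htail := le_BMnormS_indicator_compl_euclBall hn hp ht.le
  refine ⟨⟨_, _, hc, ENNReal.rpow_lt_top_of_nonneg (by positivity) (by finiteness),
      (htail 0).trans (BMnormS_mono hp.le fun x => ?_), BMnormS_rpow_neg_ernorm_le hn hp hpt⟩,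
    ⟨_, hc, fun j => ?_⟩, fun hlim => ?_⟩
  · by_cases hx : x ∈ (euclBall (n := n) 0)ᶜ <;> simp [hx]
  · have := htail (2 ^ j)
    rwa [Set.indicator_compl] at this
  · obtain ⟨R, hR⟩ := (hlim.eventually (gt_mem_nhds hc)).exists
    exact (htail R).not_gt hR
end
end
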